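/- The only vertex of the graph G' at distance at least 3 from the vertex S_n' is v; every other vertex of G' is at distance at most 2 from S_n'. -/

import Mathlib

/-- Raw vertex names for the graph `G'`: `G(Q,S)` with `q*` and `u₂` deleted and a new
vertex `x` added (adjacent to `v` and `w`). -/
inductive HVertex' (m n : ℕ) : Type
  | elt : Fin m → HVertex' m n
  | hyp : Fin n → HVertex' m n
  | copy : Fin n → HVertex' m n
  | sub : Fin m → Fin n → HVertex' m n
  | u1 : HVertex' m n
  | x : HVertex' m n
  | v : HVertex' m n
  | w : HVertex' m n

/-- A raw vertex name is an actual vertex of `G'`: the subdivision vertex `q^i_j`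
exists only when `q_i ∈ S_j`. -/
def HVertex'.OK {m n : ℕ} (S : Fin n → Set (Fin m)) : HVertex' m n → Prop
  | .sub i j => i ∈ S j
  | _ => True

/-- The vertex set of `G'`. -/
def GVertex' {m n : ℕ} (S : Fin n → Set (Fin m)) : Type := {y : HVertex' m n // y.OK S}

/-- The (asymmetrically listed) edges of `G'`:
`q^i_j q_i`, `q^i_j S_j`, `q_i S_j'` (for `q_i ∈ S_j`), `S_j S_k'` (all `j,k`),
`u₁ S_j`, `u₁ v`, `x v`, `x w`, `w S_j'`. -/
def baseAdj' {m n : ℕ} (S : Fin n → Set (Fin m)) : HVertex' m n → HVertex' m n → Prop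
  | .sub i _, .elt i' => i = i'
  | .sub _ j, .hyp j' => j = j'
  | .elt i, .copy j => i ∈ S j
  | .hyp _, .copy _ => True
  | .u1, .hyp _ => True
  | .u1, .v => True
  | .x, .v => True
  | .x, .w => True
  | .w, .copy _ => True
  | _, _ => False

/-- The graph `G'`. -/
def GQS' {m n : ℕ} (S : Fin n → Set (Fin m)) : SimpleGraph (GVertex' S) :=
  SimpleGraph.fromRel (fun a b => baseAdj' S a.1 b.1)

/-! The neighbours of `S_n'` are every `q_i` (as `S_n = Q`), every `S_j` and `w`; between them
they are adjacent to every vertex except `v`. The neighbours of `v` are `u₁` and `x`, none of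
which is adjacent to a hyperedge copy, so `S_n'` and `v` have no common neighbour, while the
path `S_n' S_n u₁ v` shows they are connected. -/

namespace SimpleGraph

variable {V : Type*} {G : SimpleGraph V} {a b c : V}

lemma dist_le_two_of_adj_of_adj (hab : G.Adj a b) (hbc : G.Adj b c) : G.dist a c ≤ 2 :=
  G.dist_le (.cons hab (.cons hbc .nil))

lemma Reachable.three_le_dist (hr : G.Reachable a b) (hne : a ≠ b) (hadj : ¬G.Adj a b)
    (hcommon : G.commonNeighbors a b = ∅) : 3 ≤ G.dist a b := by
  have h := two_lt_edist_iff.mpr ⟨hne, hadj, hcommon⟩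
  rw [← hr.coe_dist_eq_edist] at h
  exact_mod_cast h

end SimpleGraph

namespace GQS'

open SimpleGraph

variable {m n : ℕ} (S : Fin n → Set (Fin m))

lemma baseAdj'_irrefl (a : HVertex' m n) : ¬baseAdj' S a a := by
  cases a <;> simp [baseAdj']

lemma adj_iff (a b : GVertex' S) :
    (GQS' S).Adj a b ↔ baseAdj' S a.1 b.1 ∨ baseAdj' S b.1 a.1 := by
  refine (fromRel_adj _ a b).trans (and_iff_right_of_imp ?_)
  rintro h rfl
  exact h.elim (baseAdj'_irrefl S _) (baseAdj'_irrefl S _)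

lemma copy_adj_hyp (k j : Fin n) : (GQS' S).Adj ⟨.copy k, trivial⟩ ⟨.hyp j, trivial⟩ :=
  (adj_iff S _ _).2 (.inr trivial)

lemma copy_adj_elt {k : Fin n} {i : Fin m} (h : i ∈ S k) :
    (GQS' S).Adj ⟨.copy k, trivial⟩ ⟨.elt i, trivial⟩ :=
  (adj_iff S _ _).2 (.inr h)

lemma copy_adj_w (k : Fin n) : (GQS' S).Adj ⟨.copy k, trivial⟩ ⟨.w, trivial⟩ :=
  (adj_iff S _ _).2 (.inr trivial)

lemma hyp_adj_copy (j k : Fin n) : (GQS' S).Adj ⟨.hyp j, trivial⟩ ⟨.copy k, trivial⟩ :=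
  (copy_adj_hyp S k j).symm

lemma hyp_adj_u1 (j : Fin n) : (GQS' S).Adj ⟨.hyp j, trivial⟩ ⟨.u1, trivial⟩ :=
  (adj_iff S _ _).2 (.inr trivial)

lemma elt_adj_sub {i : Fin m} {j : Fin n} (h : i ∈ S j) :
    (GQS' S).Adj ⟨.elt i, trivial⟩ ⟨.sub i j, h⟩ :=
  (adj_iff S _ _).2 (.inr rfl)

lemma u1_adj_v : (GQS' S).Adj ⟨.u1, trivial⟩ ⟨.v, trivial⟩ :=
  (adj_iff S _ _).2 (.inl trivial)

lemma w_adj_x : (GQS' S).Adj ⟨.w, trivial⟩ ⟨.x, trivial⟩ :=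
  (adj_iff S _ _).2 (.inr trivial)

lemma not_adj_copy_v (k : Fin n) : ¬(GQS' S).Adj ⟨.copy k, trivial⟩ ⟨.v, trivial⟩ :=
  fun h => ((adj_iff S _ _).1 h).elim id id

lemma commonNeighbors_copy_v (k : Fin n) :
    (GQS' S).commonNeighbors ⟨.copy k, trivial⟩ ⟨.v, trivial⟩ = ∅ := by
  refine Set.eq_empty_of_forall_notMem fun ⟨z, hz⟩ hmem => ?_
  obtain ⟨hkz, hvz⟩ := (mem_commonNeighbors _).1 hmem
  have hkz := (adj_iff S _ _).1 hkz
  have hvz := (adj_iff S _ _).1 hvz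
  cases z <;> simp [baseAdj'] at hkz hvz

lemma reachable_copy_v (k : Fin n) : (GQS' S).Reachable ⟨.copy k, trivial⟩ ⟨.v, trivial⟩ :=
  ⟨.cons (copy_adj_hyp S k k) (.cons (hyp_adj_u1 S k) (.cons (u1_adj_v S) .nil))⟩

theorem three_le_dist_copy_v (k : Fin n) :
    3 ≤ (GQS' S).dist ⟨.copy k, trivial⟩ ⟨.v, trivial⟩ :=
  (reachable_copy_v S k).three_le_dist (fun h => nomatch congrArg Subtype.val h)
    (not_adj_copy_v S k) (commonNeighbors_copy_v S k)

theorem dist_copy_le_two {k : Fin n} (hk : S k = Set.univ) (y : GVertex' S)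
    (hy : y.1 ≠ .v) : (GQS' S).dist ⟨.copy k, trivial⟩ y ≤ 2 := by
  have hS : ∀ i, i ∈ S k := by simp [hk]
  obtain ⟨y, hyOK⟩ := y
  cases y with
  | elt i => exact (dist_eq_one_iff_adj.mpr (copy_adj_elt S (hS i))).trans_le one_le_two
  | hyp j => exact (dist_eq_one_iff_adj.mpr (copy_adj_hyp S k j)).trans_le one_le_two
  | copy l => exact dist_le_two_of_adj_of_adj (copy_adj_hyp S k k) (hyp_adj_copy S k l)
  | sub i j => exact dist_le_two_of_adj_of_adj (copy_adj_elt S (hS i)) (elt_adj_sub S hyOK)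
  | u1 => exact dist_le_two_of_adj_of_adj (copy_adj_hyp S k k) (hyp_adj_u1 S k)
  | x => exact dist_le_two_of_adj_of_adj (copy_adj_w S k) (w_adj_x S)
  | v => exact absurd rfl hy
  | w => exact (dist_eq_one_iff_adj.mpr (copy_adj_w S k)).trans_le one_le_two

end GQS'

theorem stmt_17 {m n : ℕ} (S : Fin n → Set (Fin m)) (hn : 2 ≤ n)
    (hSlast : S ⟨n - 1, by omega⟩ = Set.univ) :
    3 ≤ (GQS' S).dist ⟨.copy ⟨n - 1, by omega⟩, trivial⟩ ⟨.v, trivial⟩ ∧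
    ∀ y : GVertex' S, y.1 ≠ HVertex'.v →
      (GQS' S).dist ⟨.copy ⟨n - 1, by omega⟩, trivial⟩ y ≤ 2 :=
  ⟨GQS'.three_le_dist_copy_v S _, GQS'.dist_copy_le_two S hSlast⟩
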